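/- arXiv:math/9805084 — 7 statements merged into one kernel-verified Lean document; each statement's English description precedes it below -/
import Mathlib

section
/- Let D be a set of positive integers. The distance graph G(ℤ, D) is bipartite if and only if there exists a non-negative integer k such that every element of D is 2^k times an odd integer (i.e., the set (1/2^k)·D contains only odd integers). -/
/-
If every distance is `2^k` times an odd number, colouring `x` by the parity of `⌊x / 2^k⌋` is
proper, since a step by `2^k m` changes `⌊x / 2^k⌋` by the odd number `m`.
Conversely, in a proper colouring by `ZMod 2` every step by a distance in `D` flips the colour,
so `t * d` has colour `C 0 + t`. If `2^j m` and `2^k n` (with `m`, `n` odd and `j < k`) both lie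
in `D`, their common multiple `2^k m n` is reached from `0` both by an even number `2^(k-j) n`
of steps of the first and by an odd number `m` of steps of the second: a contradiction.
-/

/-- The distance graph on ℤ with distance set `D`: distinct integers are adjacent
exactly when the absolute value of their difference lies in `D`. -/
def distGraph (D : Set ℕ) : SimpleGraph ℤ where
  Adj x y := x ≠ y ∧ (x - y).natAbs ∈ D
  symm := by
    constructor
    intro x y ⟨h1, h2⟩
    exact ⟨h1.symm, by rw [← Int.natAbs_neg, neg_sub] at h2; exact h2⟩
  loopless := by
    constructor
    intro x ⟨h, _⟩
    exact h rfl

theorem ZMod.eq_add_one_of_ne_mod_two : ∀ {a b : ZMod 2}, a ≠ b → a = b + 1 := by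
  decide

theorem Int.cast_add_odd_mul_two_pow_ediv {m : ℕ} (hm : Odd m) (x : ℤ) (k : ℕ) :
    (((x + m * 2 ^ k) / 2 ^ k : ℤ) : ZMod 2) = ((x / 2 ^ k : ℤ) : ZMod 2) + 1 := by
  rw [Int.add_mul_ediv_right _ _ (by positivity), Int.cast_add, Int.cast_natCast,
    (ZMod.natCast_eq_one_iff_odd).mpr hm]

theorem Int.cast_ediv_two_pow_ne_of_natAbs_sub {m : ℕ} (hm : Odd m) {x y : ℤ} {k : ℕ}
    (h : (x - y).natAbs = 2 ^ k * m) :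
    ((x / 2 ^ k : ℤ) : ZMod 2) ≠ ((y / 2 ^ k : ℤ) : ZMod 2) := by
  have flip (a : ZMod 2) : a + 1 ≠ a := by simp
  rcases Int.natAbs_eq_iff.mp h with h | h
  · rw [show x = y + m * 2 ^ k by push_cast at h; linarith, cast_add_odd_mul_two_pow_ediv hm]
    exact flip _
  · rw [show y = x + m * 2 ^ k by push_cast at h; linarith, cast_add_odd_mul_two_pow_ediv hm]
    exact (flip _).symm

namespace distGraph

variable {D : Set ℕ}

theorem adj_add_natCast {d : ℕ} (hd : d ∈ D) (hd₀ : d ≠ 0) (x : ℤ) :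
    (distGraph D).Adj (x + d) x :=
  ⟨by omega, by simpa using hd⟩

def parityColoring (k : ℕ) (hD : ∀ d ∈ D, ∃ m, Odd m ∧ d = 2 ^ k * m) :
    (distGraph D).Coloring (ZMod 2) :=
  SimpleGraph.Coloring.mk (fun x => ((x / 2 ^ k : ℤ) : ZMod 2)) fun {_ _} hxy => by
    obtain ⟨m, hm, hd⟩ := hD _ hxy.2
    exact Int.cast_ediv_two_pow_ne_of_natAbs_sub hm hd

section Coloring

variable (C : (distGraph D).Coloring (ZMod 2))
include C

theorem coloring_add_mul {d : ℕ} (hd : d ∈ D) (hd₀ : d ≠ 0) (x : ℤ) (t : ℕ) :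
    C (x + t * d) = C x + t := by
  induction t with
  | zero => simp
  | succ t ih =>
    have step := ZMod.eq_add_one_of_ne_mod_two (C.valid (adj_add_natCast hd hd₀ (x + t * d)))
    rw [show x + ((t + 1 : ℕ) : ℤ) * d = x + t * d + d by push_cast; ring, step, ih]
    push_cast
    ring

theorem coloring_natCast_eq_of_mul_eq {d e : ℕ} (hd : d ∈ D) (hd₀ : d ≠ 0) (he : e ∈ D)
    (he₀ : e ≠ 0) {s t : ℕ} (h : s * d = t * e) : (s : ZMod 2) = t := by
  have := coloring_add_mul C hd hd₀ 0 s
  rwa [show (s : ℤ) * d = t * e by exact_mod_cast h, coloring_add_mul C he he₀,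
    add_right_inj, eq_comm] at this

theorem two_pow_exponent_eq_of_coloring {j k m n : ℕ} (hm : Odd m) (hn : Odd n)
    (hd : 2 ^ j * m ∈ D) (he : 2 ^ k * n ∈ D) : j = k := by
  wlog hjk : j ≤ k generalizing j k m n
  · exact (this hn hm he hd (le_of_not_ge hjk)).symm
  have hd₀ : 2 ^ j * m ≠ 0 := by simp [hm.pos.ne']
  have he₀ : 2 ^ k * n ≠ 0 := by simp [hn.pos.ne']
  obtain ⟨i, rfl⟩ := Nat.exists_eq_add_of_le hjk
  have hcommon : (2 ^ i * n) * (2 ^ j * m) = m * (2 ^ (j + i) * n) := by ring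
  have hparity := coloring_natCast_eq_of_mul_eq C hd hd₀ he he₀ hcommon
  rw [(ZMod.natCast_eq_one_iff_odd).mpr hm, ZMod.natCast_eq_one_iff_odd] at hparity
  by_contra hi
  exact (by decide : ¬Odd 2) ((Nat.odd_pow_iff (by omega)).mp (Nat.Odd.of_mul_left hparity))

end Coloring

end distGraph

/-- For a set `D` of positive integers, `G(ℤ, D)` is bipartite
(admits a proper 2-coloring) iff there is a non-negative integer `k` such that
every element of `D` is `2^k` times an odd integer. -/
theorem distGraph_bipartite_iff (D : Set ℕ) (hpos : ∀ d ∈ D, 0 < d) :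
    (distGraph D).Colorable 2 ↔
      ∃ k : ℕ, ∀ d ∈ D, ∃ m : ℕ, Odd m ∧ d = 2 ^ k * m := by
  constructor
  · rintro ⟨C⟩
    rcases D.eq_empty_or_nonempty with rfl | ⟨d₀, hd₀⟩
    · exact ⟨0, by simp⟩
    obtain ⟨k, m₀, hm₀, rfl⟩ := Nat.exists_eq_two_pow_mul_odd (hpos d₀ hd₀).ne'
    refine ⟨k, fun d hd => ?_⟩
    obtain ⟨j, m, hm, rfl⟩ := Nat.exists_eq_two_pow_mul_odd (hpos d hd).ne'
    exact ⟨m, hm, by rw [distGraph.two_pow_exponent_eq_of_coloring C hm hm₀ hd hd₀]⟩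
  · rintro ⟨k, hk⟩
    exact ⟨distGraph.parityColoring k hk⟩
end

section
/- Let D be a finite nonempty set of positive integers, let q = max(D), and let k be a positive integer with k ≤ q. If the subgraph of G(ℤ, D) induced by the interval of integers [1, q^q + q] admits a proper k-coloring, then χ(D) ≤ k. -/
/-!
Among the `q ^ q + 1` windows `[a, a + q)` with `1 ≤ a ≤ q ^ q + 1`, which lie inside
`[1, q ^ q + q]`, two carry the same pattern of colours, since there are only
`k ^ q ≤ q ^ q` patterns. If the windows at `a < b` agree, the colouring of `[a, b)` repeated
with period `b - a` agrees with the given colouring on all of `[a, b + q)`. Every edge has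
length at most `q`, so some translate by a multiple of `b - a` of any edge lies in `[a, b + q)`,
where the colouring is proper.
-/

open SimpleGraph

variable {α : Type*}

theorem SimpleGraph.Coloring.exists_extend_of_induce {V : Type*} {G : SimpleGraph V}
    {S : Set V} [Nonempty α] (C : (G.induce S).Coloring α) :
    ∃ c : V → α, ∀ x ∈ S, ∀ y ∈ S, G.Adj x y → c x ≠ c y := by
  let c : V → α := Function.extend Subtype.val C fun _ => Classical.arbitrary α
  have hc : ∀ x (hx : x ∈ S), c x = C ⟨x, hx⟩ := fun x hx =>
    Subtype.val_injective.extend_apply C _ ⟨x, hx⟩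
  refine ⟨c, fun x hx y hy hxy => ?_⟩
  rw [hc x hx, hc y hy]
  exact C.valid hxy

theorem exists_window_eq [Fintype α] (c : ℤ → α) (m : ℤ) {q n : ℕ}
    (hn : Fintype.card α ^ q < n) :
    ∃ a b : ℤ, m ≤ a ∧ a < b ∧ b < m + n ∧ ∀ s : ℕ, s < q → c (a + s) = c (b + s) := by
  have hcard : Fintype.card (Fin q → α) < Fintype.card (Fin n) := by simpa using hn
  obtain ⟨i, j, hij, hw⟩ := Fintype.exists_ne_map_eq_of_card_lt
    (fun i : Fin n => fun s : Fin q => c (m + (i : ℕ) + s)) hcard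
  have hwin : ∀ s : ℕ, s < q → c (m + (i : ℕ) + s) = c (m + (j : ℕ) + s) :=
    fun s hs => congrFun hw ⟨s, hs⟩
  rcases lt_or_gt_of_ne (Fin.val_ne_of_ne hij) with h | h
  · exact ⟨m + (i : ℕ), m + (j : ℕ), by omega, by omega, by omega, hwin⟩
  · exact ⟨m + (j : ℕ), m + (i : ℕ), by omega, by omega, by omega,
      fun s hs => (hwin s hs).symm⟩

def periodicExtension (c : ℤ → α) (a b x : ℤ) : α :=
  c (a + (x - a) % (b - a))

section Window

variable {c : ℤ → α} {a b : ℤ} {q : ℕ}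

theorem periodicExtension_eq_of_window_eq (hab : a < b)
    (hwin : ∀ s : ℕ, s < q → c (a + s) = c (b + s)) {x : ℤ} (hax : a ≤ x) (hxb : x < b + q) :
    periodicExtension c a b x = c x := by
  obtain ⟨n, rfl⟩ : ∃ n : ℕ, x = a + n := ⟨(x - a).toNat, by omega⟩
  induction n using Nat.strong_induction_on with
  | _ n ih =>
  unfold periodicExtension
  rw [add_sub_cancel_left]
  rcases lt_or_ge (n : ℤ) (b - a) with hn | hn
  · rw [Int.emod_eq_of_lt (by positivity) hn]
  · obtain ⟨m, hm⟩ : ∃ m : ℕ, (n : ℤ) = m + (b - a) := ⟨(n - (b - a)).toNat, by omega⟩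
    calc c (a + (n : ℤ) % (b - a)) = periodicExtension c a b (a + m) := by
          rw [periodicExtension, add_sub_cancel_left, hm, Int.add_emod_right]
      _ = c (a + m) := ih m (by omega) (by omega) (by omega)
      _ = c (b + m) := hwin m (by omega)
      _ = c (a + n) := by rw [hm]; ring_nf

variable {D : Set ℕ}

theorem periodicExtension_ne_of_adj (hD : ∀ d ∈ D, d ≤ q) (hab : a < b)
    (hproper : ∀ x ∈ Set.Ico a (b + q), ∀ y ∈ Set.Ico a (b + q),
      (distGraph D).Adj x y → c x ≠ c y)
    (hwin : ∀ s : ℕ, s < q → c (a + s) = c (b + s)) {x y : ℤ} (hxy : (distGraph D).Adj x y) :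
    periodicExtension c a b x ≠ periodicExtension c a b y := by
  wlog hlt : x < y generalizing x y
  · exact (this hxy.symm (lt_of_le_of_ne (not_lt.mp hlt) hxy.ne.symm)).symm
  have hd : ((x - y).natAbs : ℤ) ≤ q := by exact_mod_cast hD _ hxy.2
  set r := (x - a) % (b - a) with hr
  have hr0 : 0 ≤ r := Int.emod_nonneg _ (by omega)
  have hrp : r < b - a := Int.emod_lt_of_pos _ (by omega)
  -- translate the edge `x y` back to `a + r`, `a + r + (y - x)`, both in `[a, b + q)`
  have hy : periodicExtension c a b y = c (a + r + (y - x)) := by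
    rw [← periodicExtension_eq_of_window_eq hab hwin (by omega) (by omega), periodicExtension,
      periodicExtension, show a + r + (y - x) - a = r + (y - x) by ring, hr, Int.emod_add_emod,
      show x - a + (y - x) = y - a by ring]
  rw [hy]
  refine hproper _ ⟨by omega, by omega⟩ _ ⟨by omega, by omega⟩ ⟨by omega, ?_⟩
  rw [show a + r - (a + r + (y - x)) = x - y by ring]
  exact hxy.2

theorem distGraph_coloring_of_window_eq (hD : ∀ d ∈ D, d ≤ q) (hab : a < b)
    (hproper : ∀ x ∈ Set.Ico a (b + q), ∀ y ∈ Set.Ico a (b + q),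
      (distGraph D).Adj x y → c x ≠ c y)
    (hwin : ∀ s : ℕ, s < q → c (a + s) = c (b + s)) :
    Nonempty ((distGraph D).Coloring α) :=
  ⟨Coloring.mk (periodicExtension c a b) (periodicExtension_ne_of_adj hD hab hproper hwin)⟩

end Window

theorem distGraph_chromaticNumber_le_of_colorable_interval_general (D : Set ℕ)
    (q : ℕ) (hqmax : ∀ d ∈ D, d ≤ q)
    (k : ℕ) (hk : 0 < k) (hkq : k ≤ q)
    (hcol : ((distGraph D).induce (Set.Icc (1 : ℤ) ((q : ℤ) ^ q + q))).Colorable k) :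
    (distGraph D).chromaticNumber ≤ k := by
  obtain ⟨C⟩ := hcol
  have : Nonempty (Fin k) := Fin.pos_iff_nonempty.mp hk
  obtain ⟨c, hc⟩ := C.exists_extend_of_induce
  have hpatterns : Fintype.card (Fin k) ^ q < q ^ q + 1 := by
    rw [Fintype.card_fin]
    exact Nat.lt_succ_of_le (Nat.pow_le_pow_left hkq q)
  obtain ⟨a, b, ha, hab, hb, hwin⟩ := exists_window_eq c 1 hpatterns
  have hsub : Set.Ico a (b + q) ⊆ Set.Icc 1 ((q : ℤ) ^ q + q) := by
    push_cast at hb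
    exact fun x hx => ⟨by linarith [hx.1], by linarith [hx.2]⟩
  exact Colorable.chromaticNumber_le <| distGraph_coloring_of_window_eq hqmax hab
    (fun x hx y hy => hc x (hsub hx) y (hsub hy)) hwin

/-- Let `D` be a finite nonempty set of positive integers with
maximum `q`, and let `k` be a positive integer with `k ≤ q`. If the subgraph of
`G(ℤ, D)` induced by the integer interval `[1, q^q + q]` has a proper `k`-coloring,
then `χ(D) ≤ k`. -/
theorem distGraph_chromaticNumber_le_of_colorable_interval (D : Set ℕ)
    (hfin : D.Finite) (hne : D.Nonempty) (hpos : ∀ d ∈ D, 0 < d)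
    (q : ℕ) (hqmem : q ∈ D) (hqmax : ∀ d ∈ D, d ≤ q)
    (k : ℕ) (hk : 0 < k) (hkq : k ≤ q)
    (hcol : ((distGraph D).induce (Set.Icc (1 : ℤ) ((q : ℤ) ^ q + q))).Colorable k) :
    (distGraph D).chromaticNumber ≤ k :=
  distGraph_chromaticNumber_le_of_colorable_interval_general D q hqmax k hk hkq hcol
end

section
/- If D is a divisibility chain (a set of positive integers totally ordered by the divisibility relation), then χ(D) ≤ 4. -/
/-!
Pick `α` such that `d α` lies at distance at least `1 / 4` from `ℤ` for every `d ∈ D`. Then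
colouring `x` by the quarter of `[0, 1)` that contains the fractional part of `x α` is proper,
because adjacent `x`, `y` have `x α`, `y α` at least `1 / 4` apart modulo `1`.

For a finite chain, build `α` by adding elements from the top down. Let `a` be the new
minimum, with `a q ∣ d` for the remaining `d` and `q ≥ 2`. Shifting `α` by multiples of
`1 / (a q)` leaves every old `d α` unchanged modulo `1`, and it moves `a α` in steps of
`1 / q ≤ 1 / 2`. So `a α` can be brought into `[1 / 4, 3 / 4]` modulo `1`. Compactness of
`[0, 1]` handles infinite chains.
-/

open Set

lemma le_abs_sub_intCast_of_mem_Icc {y : ℝ} (hy : y ∈ Icc (1 / 4 : ℝ) (3 / 4)) (n : ℤ) :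
    1 / 4 ≤ |y - n| := by
  rcases le_or_gt n 0 with hn | hn
  · have : (n : ℝ) ≤ 0 := by exact_mod_cast hn
    exact le_abs.mpr (Or.inl (by linarith [hy.1]))
  · have : (1 : ℝ) ≤ n := by exact_mod_cast hn
    exact le_abs.mpr (Or.inr (by linarith [hy.2]))

lemma exists_add_intCast_div_mem_Icc (x : ℝ) {q : ℕ} (hq : 2 ≤ q) :
    ∃ j : ℤ, x + j / q ∈ Icc (1 / 4 : ℝ) (3 / 4) := by
  have hq' : (2 : ℝ) ≤ q := by exact_mod_cast hq
  refine ⟨⌈q * (1 / 4 - x)⌉, ?_, ?_⟩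
  · have := Int.le_ceil (q * (1 / 4 - x))
    rw [← sub_le_iff_le_add', le_div_iff₀ (by positivity)]
    linarith
  · have := Int.ceil_lt_add_one (q * (1 / 4 - x))
    rw [← le_sub_iff_add_le', div_le_iff₀ (by positivity)]
    nlinarith

lemma exists_two_le_forall_mul_dvd_of_dvd_chain {a : ℕ} {s : Finset ℕ} (ha : 0 < a)
    (hlt : ∀ d ∈ s, a < d) (hchain : ∀ b ∈ insert a s, ∀ c ∈ insert a s, b ∣ c ∨ c ∣ b) :
    ∃ q, 2 ≤ q ∧ ∀ d ∈ s, a * q ∣ d := by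
  rcases s.eq_empty_or_nonempty with rfl | hne
  · exact ⟨2, le_rfl, by simp⟩
  have hm : s.min' hne ∈ s := s.min'_mem hne
  obtain ⟨q, hq⟩ : a ∣ s.min' hne :=
    (hchain a (s.mem_insert_self a) _ (s.mem_insert_of_mem hm)).resolve_right
      fun h => (Nat.le_of_dvd ha h).not_gt (hlt _ hm)
  refine ⟨q, ?_, fun d hd => hq ▸ ?_⟩
  · have := hlt _ hm
    rw [hq] at this
    exact (Nat.lt_mul_iff_one_lt_right ha).mp this
  · refine (hchain _ (s.mem_insert_of_mem hm) d (s.mem_insert_of_mem hd)).elim id fun h => ?_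
    have := le_antisymm (Nat.le_of_dvd (ha.trans (hlt _ hm)) h) (s.min'_le d hd)
    exact this ▸ dvd_rfl

lemma Finset.exists_forall_le_abs_mul_sub_intCast_of_dvd_chain (S : Finset ℕ)
    (hpos : ∀ d ∈ S, 0 < d) (hchain : ∀ a ∈ S, ∀ b ∈ S, a ∣ b ∨ b ∣ a) :
    ∃ α : ℝ, ∀ d ∈ S, ∀ n : ℤ, 1 / 4 ≤ |d * α - n| := by
  induction S using Finset.induction_on_min with
  | empty => exact ⟨0, by simp⟩
  | insert a s hlt ih =>
    obtain ⟨α, hα⟩ := ih (fun d hd => hpos d (mem_insert_of_mem hd))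
      (fun b hb c hc => hchain b (mem_insert_of_mem hb) c (mem_insert_of_mem hc))
    have ha : 0 < a := hpos a (mem_insert_self a s)
    obtain ⟨q, hq, hdvd⟩ := exists_two_le_forall_mul_dvd_of_dvd_chain ha hlt hchain
    obtain ⟨j, hj⟩ := exists_add_intCast_div_mem_Icc (a * α) hq
    have ha' : (a : ℝ) ≠ 0 := by positivity
    have hq' : (q : ℝ) ≠ 0 := by positivity
    refine ⟨α + j / (a * q), ?_⟩
    rintro d hd n
    rcases mem_insert.mp hd with rfl | hd
    · have : (d : ℝ) * (α + j / (d * q)) = d * α + j / q := by field_simp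
      exact this ▸ le_abs_sub_intCast_of_mem_Icc hj n
    · obtain ⟨e, rfl⟩ := hdvd d hd
      have := hα _ hd (n - e * j)
      push_cast at this ⊢
      convert this using 2
      field_simp
      ring

lemma Set.exists_forall_le_abs_mul_sub_intCast_of_dvd_chain (D : Set ℕ)
    (hpos : ∀ d ∈ D, 0 < d) (hchain : ∀ a ∈ D, ∀ b ∈ D, a ∣ b ∨ b ∣ a) :
    ∃ α : ℝ, ∀ d ∈ D, ∀ n : ℤ, 1 / 4 ≤ |d * α - n| := by
  let good (d : D) : Set ℝ := ⋂ n : ℤ, {α | 1 / 4 ≤ |(d : ℕ) * α - n|}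
  have hclosed (d : D) : IsClosed (good d) :=
    isClosed_iInter fun n => isClosed_le continuous_const (by fun_prop)
  -- The conditions are 1-periodic in `α`, so it suffices to look in the compact set `[0, 1]`.
  have hfinite (u : Finset D) : (Icc 0 1 ∩ ⋂ d ∈ u, good d).Nonempty := by
    obtain ⟨α, hα⟩ := (u.image Subtype.val).exists_forall_le_abs_mul_sub_intCast_of_dvd_chain
      (by simpa using fun d hd _ => hpos d hd)
      (by simpa using fun a ha _ b hb _ => hchain a ha b hb)
    refine ⟨Int.fract α, ⟨Int.fract_nonneg α, (Int.fract_lt_one α).le⟩, ?_⟩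
    simp only [good, mem_iInter, mem_ofPred_eq]
    intro d hd n
    have := hα d (Finset.mem_image_of_mem _ hd) (n + ((d : ℕ) : ℤ) * ⌊α⌋)
    rw [Int.fract]
    push_cast at this ⊢
    convert this using 2
    ring
  obtain ⟨α, -, hα⟩ := isCompact_Icc.inter_iInter_nonempty good hclosed hfinite
  simp only [good, mem_iInter, mem_ofPred_eq] at hα
  exact ⟨α, fun d hd => hα ⟨d, hd⟩⟩

lemma distGraph_colorable_of_forall_le_abs_mul_sub_intCast (D : Set ℕ) {k : ℕ} (hk : 0 < k)
    (α : ℝ) (hα : ∀ d ∈ D, ∀ n : ℤ, 1 / k ≤ |d * α - n|) : (distGraph D).Colorable k := by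
  have hk' : (0 : ℝ) < k := by exact_mod_cast hk
  let color (x : ℤ) : ℕ := ⌊k * Int.fract (x * α)⌋₊
  have hcolor_lt (x : ℤ) : color x < k :=
    (Nat.floor_lt (by positivity)).mpr (by nlinarith [Int.fract_lt_one ((x : ℝ) * α)])
  have hclose {x y : ℤ} (h : color x = color y) :
      |Int.fract (x * α) - Int.fract (y * α)| < 1 / k := by
    have hx := Nat.floor_le (a := k * Int.fract ((x : ℝ) * α)) (by positivity)
    have hx' := Nat.lt_floor_add_one (k * Int.fract ((x : ℝ) * α))
    have hy := Nat.floor_le (a := k * Int.fract ((y : ℝ) * α)) (by positivity)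
    have hy' := Nat.lt_floor_add_one (k * Int.fract ((y : ℝ) * α))
    simp only [color] at h
    rw [h] at hx hx'
    rw [abs_sub_lt_iff, lt_div_iff₀' hk', lt_div_iff₀' hk']
    constructor <;> linarith
  refine (SimpleGraph.colorable_iff_exists_bdd_nat_coloring k).mpr
    ⟨SimpleGraph.Coloring.mk color fun {x y} hadj hxy => ?_, hcolor_lt⟩
  obtain ⟨-, hd⟩ := hadj
  have key : |((x - y : ℤ) : ℝ) * α - (⌊x * α⌋ - ⌊y * α⌋ : ℤ)| < 1 / k := by
    convert hclose hxy using 2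
    push_cast
    rw [Int.fract, Int.fract]
    ring
  have hsign := Int.natAbs_eq (x - y)
  generalize (x - y).natAbs = d at hd hsign
  rcases hsign with h | h
  · have := hα _ hd (⌊x * α⌋ - ⌊y * α⌋)
    rw [h] at key
    push_cast at key this
    linarith
  · have := hα _ hd (⌊y * α⌋ - ⌊x * α⌋)
    rw [h, ← abs_neg] at key
    push_cast at key this
    ring_nf at key this
    linarith

/-- If `D` is a divisibility chain (a set of positive integers
totally ordered by divisibility), then `χ(D) ≤ 4`. -/
theorem distGraph_chromaticNumber_le_four_of_divisibility_chain (D : Set ℕ)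
    (hpos : ∀ d ∈ D, 0 < d) (hchain : ∀ a ∈ D, ∀ b ∈ D, a ∣ b ∨ b ∣ a) :
    (distGraph D).chromaticNumber ≤ 4 := by
  obtain ⟨α, hα⟩ := D.exists_forall_le_abs_mul_sub_intCast_of_dvd_chain hpos hchain
  refine (distGraph_colorable_of_forall_le_abs_mul_sub_intCast D four_pos α ?_).chromaticNumber_le
  simpa using hα
end

section
/- Let D be a divisibility chain (a set of positive integers totally ordered by the divisibility relation). If no element a of D satisfies 2a ∈ D (equivalently, no ratio between consecutive elements of D equals 2), then χ(D) ≤ 3. -/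
open SimpleGraph

def NearHalfInt (ε x : ℝ) : Prop :=
  ∃ c : ℤ, |x - (c + 1 / 2)| ≤ ε

namespace NearHalfInt

variable {ε x : ℝ}

theorem mono (h : NearHalfInt ε x) {ε' : ℝ} (hε : ε ≤ ε') : NearHalfInt ε' x :=
  let ⟨c, hc⟩ := h
  ⟨c, hc.trans hε⟩

theorem add (h : NearHalfInt ε x) (δ : ℝ) : NearHalfInt (ε + |δ|) (x + δ) := by
  obtain ⟨c, hc⟩ := h
  refine ⟨c, ?_⟩
  rw [show x + δ - (c + 1 / 2) = x - (c + 1 / 2) + δ by ring]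
  exact (abs_add_le _ _).trans (by linarith)

theorem add_intCast (h : NearHalfInt ε x) (n : ℤ) : NearHalfInt ε (x + n) := by
  obtain ⟨c, hc⟩ := h
  exact ⟨c + n, by push_cast; rwa [show x + n - (c + n + 1 / 2) = x - (c + 1 / 2) by ring]⟩

theorem neg (h : NearHalfInt ε x) : NearHalfInt ε (-x) := by
  obtain ⟨c, hc⟩ := h
  refine ⟨-c - 1, ?_⟩
  rw [← abs_neg]
  push_cast
  rwa [show -(-x - (-c - 1 + 1 / 2)) = x - (c + 1 / 2) by ring]

theorem of_abs_mul {a t : ℝ} (h : NearHalfInt ε (|a| * t)) : NearHalfInt ε (a * t) := by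
  rcases abs_choice a with ha | ha <;> rw [ha] at h
  · exact h
  · simpa using h.neg

theorem sub_le_abs (h : NearHalfInt ε x) : 1 / 2 - ε ≤ |x| := by
  obtain ⟨c, hc⟩ := h
  have hc' : (1 : ℝ) / 2 ≤ |(c : ℝ) + 1 / 2| := by
    rcases le_or_gt 0 c with h0 | h0
    · rw [abs_of_nonneg (by positivity)]
      have : (0 : ℝ) ≤ c := by exact_mod_cast h0
      linarith
    · have : (c : ℝ) ≤ -1 := by exact_mod_cast Int.le_sub_one_of_lt h0
      rw [abs_of_neg (by linarith)]
      linarith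
  have := abs_sub_abs_le_abs_sub ((c : ℝ) + 1 / 2) x
  rw [abs_sub_comm] at this
  linarith

theorem zero_iff : NearHalfInt 0 x ↔ ∃ c : ℤ, x = c + 1 / 2 := by
  simp only [NearHalfInt, abs_nonpos_iff, sub_eq_zero]

theorem odd_mul (h : NearHalfInt 0 x) {q : ℕ} (hq : Odd q) : NearHalfInt 0 (q * x) := by
  obtain ⟨c, rfl⟩ := zero_iff.mp h
  obtain ⟨k, rfl⟩ := hq
  exact zero_iff.mpr ⟨2 * k * c + k + c, by push_cast; ring⟩

theorem even_mul_add_half (h : NearHalfInt 0 x) {q : ℕ} (hq : Even q) :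
    NearHalfInt 0 (q * x + 1 / 2) := by
  obtain ⟨c, rfl⟩ := zero_iff.mp h
  obtain ⟨k, rfl⟩ := hq
  exact zero_iff.mpr ⟨2 * k * c + k, by push_cast; ring⟩

end NearHalfInt

theorem floor_three_mul_fract_ne {a b : ℝ} (h : NearHalfInt (1 / 6) (a - b)) :
    ⌊3 * Int.fract a⌋ ≠ ⌊3 * Int.fract b⌋ := by
  intro hfloor
  have hclose : |3 * Int.fract a - 3 * Int.fract b| < 1 :=
    Int.abs_sub_lt_one_of_floor_eq_floor hfloor
  have hfar : 1 / 3 ≤ |Int.fract a - Int.fract b| := by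
    have h' := h.add_intCast (⌊b⌋ - ⌊a⌋)
    rw [show a - b + ((⌊b⌋ - ⌊a⌋ : ℤ) : ℝ) = Int.fract a - Int.fract b by
      unfold Int.fract; push_cast; ring] at h'
    linarith [h'.sub_le_abs]
  rw [← mul_sub, abs_mul, abs_of_pos three_pos] at hclose
  linarith

theorem distGraph_colorable_three_of_nearHalfInt {D : Set ℕ} {t : ℝ}
    (ht : ∀ d ∈ D, NearHalfInt (1 / 6) (d * t)) : (distGraph D).Colorable 3 := by
  let color (x : ℤ) : ℤ := ⌊3 * Int.fract (x * t)⌋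
  have hcolor (x : ℤ) : 0 ≤ color x ∧ color x < 3 := by
    have := Int.fract_nonneg ((x : ℝ) * t)
    have := Int.fract_lt_one ((x : ℝ) * t)
    constructor
    · exact Int.floor_nonneg.mpr (by positivity)
    · exact Int.floor_lt.mpr (by push_cast; linarith)
  let C : (distGraph D).Coloring (ZMod 3) := Coloring.mk (fun x => (color x : ZMod 3)) <| by
    rintro x y ⟨-, hxy⟩ heq
    have hnear : NearHalfInt (1 / 6) (x * t - y * t) := by
      have := ht _ hxy
      rw [Nat.cast_natAbs, Int.cast_abs, Int.cast_sub] at this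
      rw [← sub_mul]
      exact this.of_abs_mul
    have hne : color x ≠ color y := floor_three_mul_fract_ne hnear
    rw [ZMod.intCast_eq_intCast_iff_dvd_sub] at heq
    have := hcolor x
    have := hcolor y
    omega
  simpa using C.colorable

theorem exists_nearHalfInt_mul_of_nearHalfInt {s : Finset ℕ} {m q : ℕ} (hm : 0 < m)
    (hq : 3 ≤ q) {t : ℝ} (hmt : NearHalfInt 0 (m * t))
    (ht : ∀ d ∈ s, NearHalfInt ((1 - d / m) / 6) (d * t)) :
    ∃ t' : ℝ, NearHalfInt 0 ((m * q : ℕ) * t') ∧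
      ∀ d ∈ s, NearHalfInt ((1 - d / (m * q : ℕ)) / 6) (d * t') := by
  have hmR : (0 : ℝ) < m := by exact_mod_cast hm
  rcases Nat.even_or_odd q with hq2 | hq2
  · have hq4 : (4 : ℝ) ≤ q := by
      obtain ⟨k, rfl⟩ := hq2
      exact_mod_cast (by omega : 4 ≤ k + k)
    refine ⟨t + 1 / (2 * (m * q)), ?_, fun d hd => ?_⟩
    · convert hmt.even_mul_add_half hq2 using 1
      push_cast
      field_simp
    · have hd0 : (0 : ℝ) ≤ d := d.cast_nonneg
      have h4 : 4 * ((d : ℝ) / (m * q)) ≤ d / m := by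
        rw [← mul_div_assoc, div_le_div_iff₀ (by positivity) hmR]
        nlinarith [mul_nonneg (mul_nonneg hd0 hmR.le) hmR.le]
      have hslack :
          (1 - (d : ℝ) / m) / 6 + |(d : ℝ) / (2 * (m * q))| ≤ (1 - d / (m * q)) / 6 := by
        rw [abs_of_nonneg (by positivity), show (d : ℝ) / (2 * (m * q)) = d / (m * q) / 2 by ring]
        linarith
      convert ((ht d hd).add _).mono hslack using 1 <;> push_cast <;> ring
  · refine ⟨t, ?_, fun d hd => (ht d hd).mono ?_⟩
    · convert hmt.odd_mul hq2 using 1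
      push_cast
      ring
    · have : (d : ℝ) / (m * q) ≤ d / m := div_le_div_of_nonneg_left d.cast_nonneg hmR
        (le_mul_of_one_le_right hmR.le (by exact_mod_cast hq2.pos))
      push_cast
      linarith

theorem exists_nearHalfInt_of_isGreatest {s : Finset ℕ} (hpos : ∀ d ∈ s, 0 < d)
    (hs : ∀ a ∈ s, ∀ b ∈ s, a < b → a ∣ b ∧ 3 * a ≤ b) {m : ℕ} (hm : IsGreatest (s : Set ℕ) m) :
    ∃ t : ℝ, NearHalfInt 0 (m * t) ∧ ∀ d ∈ s, NearHalfInt ((1 - d / m) / 6) (d * t) := by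
  classical
  induction s using Finset.induction_on_max generalizing m with
  | empty => exact absurd hm.1 (Finset.notMem_empty m)
  | insert a s hlt ih =>
    obtain rfl : m = a := by
      rcases Finset.mem_insert.mp hm.1 with h | h
      · exact h
      · exact absurd (hm.2 (Finset.mem_insert_self a s)) (hlt m h).not_ge
    have hmR : (0 : ℝ) < m := by exact_mod_cast hpos m hm.1
    suffices ∃ t : ℝ, NearHalfInt 0 (m * t) ∧ ∀ d ∈ s, NearHalfInt ((1 - d / m) / 6) (d * t) by
      obtain ⟨t, hmt, ht⟩ := this
      refine ⟨t, hmt, (Finset.forall_mem_insert _ _ _).mpr ⟨hmt.mono ?_, ht⟩⟩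
      rw [div_self hmR.ne', sub_self, zero_div]
    rcases s.eq_empty_or_nonempty with rfl | hne
    · exact ⟨1 / (2 * m), NearHalfInt.zero_iff.mpr ⟨0, by field_simp; norm_num⟩, by simp⟩
    have hmem' := s.max'_mem hne
    obtain ⟨t, hm't, ht⟩ := ih (fun d hd => hpos d (Finset.mem_insert_of_mem hd))
      (fun a ha b hb => hs a (Finset.mem_insert_of_mem ha) b (Finset.mem_insert_of_mem hb))
      (s.isGreatest_max' hne)
    obtain ⟨⟨q, hq⟩, h3⟩ := hs _ (Finset.mem_insert_of_mem hmem') m (Finset.mem_insert_self m s)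
      (hlt _ hmem')
    have hpos' := hpos _ (Finset.mem_insert_of_mem hmem')
    rw [hq] at h3 ⊢
    exact exists_nearHalfInt_mul_of_nearHalfInt hpos' (by nlinarith) hm't ht

theorem distGraph_colorable_three_of_finset {s : Finset ℕ} (hpos : ∀ d ∈ s, 0 < d)
    (hs : ∀ a ∈ s, ∀ b ∈ s, a < b → a ∣ b ∧ 3 * a ≤ b) : (distGraph s).Colorable 3 := by
  rcases s.eq_empty_or_nonempty with rfl | hne
  · exact distGraph_colorable_three_of_nearHalfInt (t := 0) (by simp)
  obtain ⟨t, -, ht⟩ := exists_nearHalfInt_of_isGreatest hpos hs (s.isGreatest_max' hne)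
  refine distGraph_colorable_three_of_nearHalfInt (t := t) fun d hd => (ht d hd).mono ?_
  have : (0 : ℝ) ≤ d / s.max' hne := by positivity
  linarith

theorem distGraph_colorable_of_forall_finset {D : Set ℕ} {n : ℕ}
    (h : ∀ s : Finset ℕ, (s : Set ℕ) ⊆ D → (distGraph s).Colorable n) :
    (distGraph D).Colorable n := by
  classical
  refine nonempty_hom_of_forall_finite_subgraph_hom fun G' hG' => ?_
  let V := hG'.toFinset
  let s : Finset ℕ := ((V ×ˢ V).image fun p => (p.1 - p.2).natAbs).filter (· ∈ D)
  let C := (h s fun d hd => (Finset.mem_filter.mp hd).2).some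
  refine ⟨fun v => C v, fun {v w} hvw => C.valid ⟨(G'.adj_sub hvw).1, ?_⟩⟩
  refine Finset.mem_filter.mpr ⟨Finset.mem_image.mpr ⟨(v, w), ?_, rfl⟩, (G'.adj_sub hvw).2⟩
  simp [V, G'.edge_vert hvw, G'.edge_vert hvw.symm]

theorem dvd_and_three_mul_le_of_lt {D : Set ℕ} (hpos : ∀ d ∈ D, 0 < d)
    (hchain : ∀ a ∈ D, ∀ b ∈ D, a ∣ b ∨ b ∣ a) (hno2 : ∀ a ∈ D, 2 * a ∉ D)
    {a b : ℕ} (ha : a ∈ D) (hb : b ∈ D) (hab : a < b) : a ∣ b ∧ 3 * a ≤ b := by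
  have hdvd : a ∣ b := (hchain a ha b hb).resolve_right fun h =>
    (Nat.le_of_dvd (hpos a ha) h).not_gt hab
  obtain ⟨q, rfl⟩ := hdvd
  have hq1 : 1 < q := (Nat.lt_mul_iff_one_lt_right (hpos a ha)).mp hab
  have hq2 : q ≠ 2 := by
    rintro rfl
    exact hno2 a ha (by rwa [mul_comm])
  exact ⟨dvd_mul_right a q, by rw [mul_comm 3 a]; exact Nat.mul_le_mul_left a (by omega)⟩

/-- If `D` is a divisibility chain such that no element `a ∈ D`
satisfies `2a ∈ D`, then `χ(D) ≤ 3`. -/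
theorem distGraph_chromaticNumber_le_three_of_divisibility_chain (D : Set ℕ)
    (hpos : ∀ d ∈ D, 0 < d) (hchain : ∀ a ∈ D, ∀ b ∈ D, a ∣ b ∨ b ∣ a)
    (hno2 : ∀ a ∈ D, 2 * a ∉ D) :
    (distGraph D).chromaticNumber ≤ 3 := by
  have hcol : (distGraph D).Colorable 3 :=
    distGraph_colorable_of_forall_finset fun s hsD =>
      distGraph_colorable_three_of_finset (fun d hd => hpos d (hsD hd))
        fun a ha b hb => dvd_and_three_mul_le_of_lt hpos hchain hno2 (hsD ha) (hsD hb)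
  exact_mod_cast hcol.chromaticNumber_le
end

section
/- Let D be a divisibility chain (a set of positive integers totally ordered by the divisibility relation). Then χ(D) ≤ 2 if and only if for all a, b ∈ D with a dividing b, the quotient b/a is odd (equivalently, every ratio between consecutive elements of D is odd). -/
open SimpleGraph

lemma Fin.two_eq_of_ne_of_ne {a b c : Fin 2} (hab : a ≠ b) (hbc : b ≠ c) : a = c := by
  revert a b c; decide

lemma Nat.factorization_eq_of_dvd_of_not_dvd_div {a b p : ℕ} (hb : b ≠ 0) (hab : a ∣ b)
    (hp : ¬ p ∣ b / a) : b.factorization p = a.factorization p := by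
  obtain ⟨q, rfl⟩ := hab
  have ha : a ≠ 0 := left_ne_zero_of_mul hb
  rw [Nat.mul_div_cancel_left q (Nat.pos_of_ne_zero ha)] at hp
  simp [Nat.factorization_mul ha (right_ne_zero_of_mul hb), Nat.factorization_eq_zero_of_not_dvd hp]

section distGraph

variable {D : Set ℕ}

lemma distGraph_adj_add_self {d : ℕ} (hd : d ∈ D) (hd0 : d ≠ 0) (x : ℤ) :
    (distGraph D).Adj (x + d) x :=
  ⟨by omega, by simpa using hd⟩

lemma distGraph_coloring_periodic (C : (distGraph D).Coloring (Fin 2)) {a : ℕ} (ha : a ∈ D)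
    (ha0 : a ≠ 0) : Function.Periodic C (2 * a : ℤ) := fun x =>
  Fin.two_eq_of_ne_of_ne
    (by rw [two_mul, ← add_assoc]; exact C.valid (distGraph_adj_add_self ha ha0 (x + a)))
    (C.valid (distGraph_adj_add_self ha ha0 x))

lemma distGraph_not_colorable_two {a b : ℕ} (ha : a ∈ D) (hb : b ∈ D) (hb0 : b ≠ 0)
    (hab : a ∣ b) (heven : Even (b / a)) : ¬ (distGraph D).Colorable 2 := by
  rintro ⟨C⟩
  obtain ⟨k, hk⟩ := heven
  have ha0 : a ≠ 0 := by rintro rfl; exact hb0 (Nat.eq_zero_of_zero_dvd hab)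
  have hb_eq : (b : ℤ) = k * (2 * a) := by
    rw [← Nat.div_mul_cancel hab, hk]; push_cast; ring
  have hsame := (distGraph_coloring_periodic C ha ha0).nat_mul k 0
  rw [← hb_eq] at hsame
  exact C.valid (distGraph_adj_add_self hb hb0 0) hsame

lemma distGraph_colorable_two_of_forall_eq_two_pow_mul_odd (ν : ℕ)
    (h : ∀ d ∈ D, ∃ m, Odd m ∧ d = 2 ^ ν * m) : (distGraph D).Colorable 2 := by
  refine ZMod.card 2 ▸ (Coloring.mk (fun x : ℤ => ((x / 2 ^ ν : ℤ) : ZMod 2)) ?_).colorable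
  rintro x y ⟨-, hxy⟩ hc
  obtain ⟨m, hm, hd⟩ := h _ hxy
  obtain ⟨t, ht, rfl⟩ : ∃ t : ℤ, Odd t ∧ x = y + 2 ^ ν * t := by
    rcases Int.natAbs_eq_iff.1 hd with h | h
    · exact ⟨m, hm.natCast, by push_cast at h; linear_combination h⟩
    · exact ⟨-m, hm.natCast.neg, by push_cast at h; linear_combination h⟩
  rw [Int.add_mul_ediv_left _ _ (by positivity), Int.cast_add, ht.intCast_zmod_two] at hc
  simp at hc

lemma exists_forall_eq_two_pow_mul_odd (hpos : ∀ d ∈ D, 0 < d)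
    (hchain : ∀ a ∈ D, ∀ b ∈ D, a ∣ b ∨ b ∣ a)
    (hodd : ∀ a ∈ D, ∀ b ∈ D, a ∣ b → Odd (b / a)) :
    ∃ ν : ℕ, ∀ d ∈ D, ∃ m, Odd m ∧ d = 2 ^ ν * m := by
  rcases D.eq_empty_or_nonempty with rfl | ⟨d₀, hd₀⟩
  · exact ⟨0, by simp⟩
  refine ⟨d₀.factorization 2, fun d hd => ⟨ordCompl[2] d, ?_, ?_⟩⟩
  · exact Nat.odd_iff.2 <|
      Nat.two_dvd_ne_zero.1 (Nat.not_dvd_ordCompl Nat.prime_two (hpos d hd).ne')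
  have hν : d.factorization 2 = d₀.factorization 2 := by
    rcases hchain d hd d₀ hd₀ with h | h
    · exact (Nat.factorization_eq_of_dvd_of_not_dvd_div (hpos d₀ hd₀).ne' h
        (hodd d hd d₀ hd₀ h).not_two_dvd_nat).symm
    · exact Nat.factorization_eq_of_dvd_of_not_dvd_div (hpos d hd).ne' h
        (hodd d₀ hd₀ d hd h).not_two_dvd_nat
  rw [← hν, Nat.ordProj_mul_ordCompl_eq_self]

end distGraph

/-- For a divisibility chain `D`, `χ(D) ≤ 2` iff for all
`a, b ∈ D` with `a ∣ b`, the quotient `b / a` is odd. -/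
theorem distGraph_chromaticNumber_le_two_iff (D : Set ℕ)
    (hpos : ∀ d ∈ D, 0 < d) (hchain : ∀ a ∈ D, ∀ b ∈ D, a ∣ b ∨ b ∣ a) :
    (distGraph D).chromaticNumber ≤ 2 ↔
      ∀ a ∈ D, ∀ b ∈ D, a ∣ b → Odd (b / a) := by
  rw [show (2 : ℕ∞) = (2 : ℕ) from rfl, chromaticNumber_le_iff_colorable]
  constructor
  · intro hC a ha b hb hab
    by_contra hnot
    exact distGraph_not_colorable_two ha hb (hpos b hb).ne' hab (Nat.not_odd_iff_even.1 hnot) hC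
  · intro hodd
    obtain ⟨ν, hν⟩ := exists_forall_eq_two_pow_mul_odd hpos hchain hodd
    exact distGraph_colorable_two_of_forall_eq_two_pow_mul_odd ν hν
end

section
/- Let D be a set of positive integers. The graph G(ℤ, D) has no periodic proper coloring (with any set of colors) if and only if D contains a multiple of every positive integer, i.e., for every positive integer k there exists d ∈ D with k | d. -/
/-!
If no element of `D` is a multiple of `k`, colouring `x` by its residue mod `k` is proper and
`k`-periodic. Conversely, a proper colouring of period `p` gives `0` and every multiple of `p` the same
colour, so no multiple of `p` lies in `D`.
-/

namespace distGraph

lemma intCast_zmod_ne_of_adj {D : Set ℕ} {k : ℕ} (hk : ∀ d ∈ D, ¬ k ∣ d) {x y : ℤ}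
    (hxy : (distGraph D).Adj x y) : (x : ZMod k) ≠ y := by
  intro heq
  have hdvd : (k : ℤ) ∣ x - y := (ZMod.intCast_eq_intCast_iff_dvd_sub y x k).mp heq.symm
  exact hk _ hxy.2 (Int.natCast_dvd.mp hdvd)

lemma adj_zero_natCast {D : Set ℕ} {d : ℕ} (hd : d ∈ D) (hd0 : 0 < d) :
    (distGraph D).Adj 0 d :=
  ⟨by omega, by simpa using hd⟩

lemma not_natAbs_dvd_of_periodic {D : Set ℕ} (hpos : ∀ d ∈ D, 0 < d) {α : Type} {f : ℤ → α}
    (hf : ∀ x y : ℤ, (distGraph D).Adj x y → f x ≠ f y) {p : ℤ} (hper : Function.Periodic f p) :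
    ∀ d ∈ D, ¬ p.natAbs ∣ d := by
  intro d hd hdvd
  obtain ⟨m, hm⟩ : p ∣ (d : ℤ) := Int.natAbs_dvd.mp (Int.natCast_dvd_natCast.mpr hdvd)
  have hfd : f d = f 0 := by
    simpa [hm, mul_comm p m] using hper.int_mul m 0
  exact hf 0 d (adj_zero_natCast hd (hpos d hd)) hfd.symm

end distGraph

/-- For a set `D` of positive integers, `G(ℤ, D)` has no
periodic proper coloring (with any set of colors) iff `D` contains a multiple of
every positive integer. -/
theorem distGraph_no_periodic_coloring_iff (D : Set ℕ) (hpos : ∀ d ∈ D, 0 < d) :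
    (¬ ∃ (α : Type) (f : ℤ → α), (∀ x y : ℤ, (distGraph D).Adj x y → f x ≠ f y) ∧
        ∃ p : ℤ, 0 < p ∧ ∀ x : ℤ, f (x + p) = f x) ↔
      ∀ k : ℕ, 0 < k → ∃ d ∈ D, k ∣ d := by
  constructor
  · intro h k hk
    by_contra! hk_free
    refine h ⟨ZMod k, Int.cast, fun x y => distGraph.intCast_zmod_ne_of_adj hk_free,
      k, by exact_mod_cast hk, fun x => ?_⟩
    simp
  · rintro hD ⟨α, f, hf, p, hp, hper⟩
    obtain ⟨d, hd, hdvd⟩ := hD p.natAbs (by omega)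
    exact distGraph.not_natAbs_dvd_of_periodic hpos hf hper d hd hdvd
end

section
/- Let D = {n! : n a positive integer} be the set of all factorials. Then the chromatic number of the factorial distance graph G(ℤ, D) equals 4, i.e., χ(D) = 4. -/
open Nat

lemma distGraph_adj_add {D : Set ℕ} {d : ℕ} (hd : d ∈ D) (hd₀ : d ≠ 0) (x : ℤ) :
    (distGraph D).Adj x (x + d) :=
  ⟨by omega, by simpa using hd⟩

lemma distGraph_colorable_of_forall_add_ne {D : Set ℕ} {α : Type*} [Fintype α] (c : ℤ → α)
    (hc : ∀ x : ℤ, ∀ d ∈ D, d ≠ 0 → c (x + d) ≠ c x) :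
    (distGraph D).Colorable (Fintype.card α) := by
  refine (SimpleGraph.Coloring.mk (G := distGraph D) c fun {x y} hxy => ?_).colorable
  obtain ⟨hxy, hD⟩ := hxy
  rcases Int.natAbs_eq (x - y) with h | h
  · rw [show x = y + (x - y).natAbs by omega]
    exact hc y _ hD (by omega)
  · rw [show y = x + (x - y).natAbs by omega]
    exact (hc x _ hD (by omega)).symm

lemma distGraph_not_colorable_three {D : Set ℕ} (h₁ : 1 ∈ D) (h₂ : 2 ∈ D) {k : ℕ}
    (hk : 3 * k ∈ D) (hk₀ : k ≠ 0) : ¬(distGraph D).Colorable 3 := by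
  rintro ⟨C⟩
  have adj₁ (x : ℤ) : C (x + 1) ≠ C x := (C.valid (distGraph_adj_add h₁ one_ne_zero x)).symm
  have adj₂ (x : ℤ) : C (x + 2) ≠ C x := (C.valid (distGraph_adj_add h₂ two_ne_zero x)).symm
  have fin_three : ∀ a b c e : Fin 3, b ≠ a → c ≠ a → c ≠ b → e ≠ b → e ≠ c → e = a := by decide
  have periodic (x : ℤ) : C (x + 3) = C x := by
    refine fin_three _ _ _ _ (adj₁ x) (adj₂ x) ?_ ?_ ?_
    · simpa [add_assoc] using adj₁ (x + 1)
    · simpa [add_assoc] using adj₂ (x + 1)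
    · simpa [add_assoc] using adj₁ (x + 2)
  have multiple (j : ℕ) : C (3 * j) = C 0 := by
    induction j with
    | zero => simp
    | succ j ih => rw [← ih, ← periodic (3 * j)]; push_cast; ring_nf
  exact C.valid (distGraph_adj_add hk (by omega) 0) (by simpa using (multiple k).symm)

lemma distGraph_colorable_four_of_floor {R : Type*} [Ring R] [LinearOrder R]
    [IsStrictOrderedRing R] [FloorRing R] (γ : R) {D : Set ℕ}
    (hD : ∀ d ∈ D, ((d : ℤ) + ⌊γ * d⌋) % 4 = 1 ∨ ((d : ℤ) + ⌊γ * d⌋) % 4 = 2) :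
    (distGraph D).Colorable 4 := by
  have hcol := distGraph_colorable_of_forall_add_ne (D := D)
    (fun x : ℤ => ((x + ⌊γ * x⌋ : ℤ) : ZMod 4)) fun x d hd _ heq => by
      rw [ZMod.intCast_eq_intCast_iff_dvd_sub] at heq
      have hlo := Int.le_floor_add (γ * x) (γ * d)
      have hhi := Int.le_floor_add_floor (γ * x) (γ * d)
      push_cast at heq
      rw [mul_add] at heq
      have := hD d hd
      omega
  simpa using hcol

section FactorialBase

variable (d : ℕ → ℕ)

noncomputable def factorialSeries : ℝ := ∑' k, (d k : ℝ) / k !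

def factorialHorner : ℕ → ℕ
  | 0 => d 0
  | n + 1 => (n + 1) * factorialHorner n + d (n + 1)

lemma factorialHorner_eq_sum (n : ℕ) :
    (factorialHorner d n : ℝ) = ∑ k ∈ Finset.range (n + 1), (d k : ℝ) * n ! / k ! := by
  induction n with
  | zero => simp [factorialHorner]
  | succ n ih =>
    rw [Finset.sum_range_succ, factorialHorner, div_eq_mul_inv,
      mul_inv_cancel_right₀ (by positivity)]
    have hscale : ∑ k ∈ Finset.range (n + 1), (d k : ℝ) * (n + 1)! / k !
        = (n + 1) * ∑ k ∈ Finset.range (n + 1), (d k : ℝ) * n ! / k ! := by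
      rw [Finset.mul_sum]
      refine Finset.sum_congr rfl fun k _ => ?_
      push_cast [factorial_succ]
      ring
    rw [hscale, ← ih]
    push_cast
    ring

lemma sum_range_add_mul_factorial_div_factorial (n N : ℕ) :
    ∑ j ∈ Finset.range N, ((j + n : ℕ) : ℝ) * n ! / (j + n + 1)! = 1 - n ! / (N + n)! := by
  have htelescope (j : ℕ) : ((j + n : ℕ) : ℝ) * n ! / (j + n + 1)!
      = (n ! : ℝ) / (j + n)! - n ! / (j + 1 + n)! := by
    rw [show j + 1 + n = j + n + 1 by ring]
    field_simp
    push_cast [factorial_succ]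
    ring
  simp_rw [htelescope, Finset.sum_range_sub' (fun j => (n ! : ℝ) / (j + n)!), zero_add,
    div_self (by positivity : (n ! : ℝ) ≠ 0)]

lemma factorialSeries_tail_summable_and_lt_one {n : ℕ} (hd : ∀ k > n, d k + 1 < k) :
    Summable (fun j => (d (j + (n + 1)) : ℝ) * n ! / (j + (n + 1))!) ∧
      ∑' j, (d (j + (n + 1)) : ℝ) * n ! / (j + (n + 1))! < 1 := by
  set g : ℕ → ℝ := fun j => ((j + n : ℕ) : ℝ) * n ! / (j + n + 1)!
  have hg_nonneg (j : ℕ) : 0 ≤ g j := by positivity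
  have hg_partial (N : ℕ) : ∑ j ∈ Finset.range N, g j ≤ 1 := by
    rw [sum_range_add_mul_factorial_div_factorial]
    linarith [show (0 : ℝ) ≤ n ! / (N + n)! by positivity]
  have hg : Summable g := summable_of_sum_range_le hg_nonneg hg_partial
  have hlt (j : ℕ) : (d (j + (n + 1)) : ℝ) * n ! / (j + (n + 1))! < g j := by
    have := hd (j + n + 1) (by omega)
    simp only [g, ← add_assoc]
    gcongr
    exact_mod_cast (by omega : d (j + n + 1) < j + n)
  have hsum : Summable (fun j => (d (j + (n + 1)) : ℝ) * n ! / (j + (n + 1))!) :=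
    hg.of_nonneg_of_le (fun j => by positivity) fun j => (hlt j).le
  exact ⟨hsum, (hsum.tsum_lt_tsum (fun j => (hlt j).le) (hlt 0) hg).trans_le
    (Real.tsum_le_of_sum_range_le hg_nonneg hg_partial)⟩

theorem floor_factorialSeries_mul_factorial {n : ℕ} (hd : ∀ k > n, d k + 1 < k) :
    ⌊factorialSeries d * n !⌋ = factorialHorner d n := by
  obtain ⟨htail, htail_lt⟩ := factorialSeries_tail_summable_and_lt_one d hd
  have hsummable : Summable (fun k => (d k : ℝ) * n ! / k !) :=
    (summable_nat_add_iff (n + 1)).1 htail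
  have hsplit : factorialSeries d * n !
      = factorialHorner d n + ∑' j, (d (j + (n + 1)) : ℝ) * n ! / (j + (n + 1))! := by
    rw [factorialHorner_eq_sum, hsummable.sum_add_tsum_nat_add, factorialSeries,
      ← tsum_mul_right]
    exact tsum_congr fun k => by ring
  rw [hsplit, Int.floor_natCast_add, Int.floor_eq_zero_iff.2 ⟨by positivity, htail_lt⟩, add_zero]

end FactorialBase

/-- `dₖ ≡ 1 - k (mod 4)` for `k ≥ 4`: this is what makes the Horner step
`Aₖ = k Aₖ₋₁ + dₖ` preserve `Aₖ ≡ 1 (mod 4)`. -/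
def fourColoringDigit (k : ℕ) : ℕ := if k < 4 then 0 else (3 * k + 1) % 4

lemma fourColoringDigit_add_one_lt {k : ℕ} (hk : 1 < k) : fourColoringDigit k + 1 < k := by
  unfold fourColoringDigit
  split
  · omega
  · have := Nat.mod_lt (3 * k + 1) four_pos
    obtain rfl | h5 : k = 4 ∨ 5 ≤ k := by omega
    · decide
    · omega

lemma factorialHorner_fourColoringDigit_mod_four {n : ℕ} (hn : 4 ≤ n) :
    factorialHorner fourColoringDigit n % 4 = 1 := by
  induction n, hn using Nat.le_induction with
  | base => decide
  | succ n hn ih =>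
    obtain ⟨q, hq⟩ : ∃ q, factorialHorner fourColoringDigit n = 4 * q + 1 :=
      ⟨factorialHorner fourColoringDigit n / 4, by omega⟩
    rw [factorialHorner, hq, fourColoringDigit, if_neg (by omega),
      show (n + 1) * (4 * q + 1) = 4 * ((n + 1) * q) + (n + 1) by ring]
    omega

lemma factorial_add_factorialHorner_fourColoringDigit_mod_four {n : ℕ} (hn : 1 ≤ n) :
    (n ! + factorialHorner fourColoringDigit n) % 4 = 1 ∨
      (n ! + factorialHorner fourColoringDigit n) % 4 = 2 := by
  rcases lt_or_ge n 4 with hsmall | hlarge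
  · interval_cases n <;> decide
  · have h4 : 4 ∣ n ! := Nat.dvd_factorial (by norm_num) hlarge
    have := factorialHorner_fourColoringDigit_mod_four hlarge
    omega

/-- The chromatic number of the factorial distance graph equals 4. -/
theorem factorialDistGraph_chromaticNumber_eq_four :
    (distGraph {n : ℕ | ∃ m : ℕ, 0 < m ∧ n = Nat.factorial m}).chromaticNumber = 4 := by
  rw [show (4 : ℕ∞) = (3 : ℕ) + 1 from rfl,
    SimpleGraph.chromaticNumber_eq_iff_colorable_not_colorable]
  refine ⟨distGraph_colorable_four_of_floor (factorialSeries fourColoringDigit) ?_,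
    distGraph_not_colorable_three ⟨1, one_pos, rfl⟩ ⟨2, two_pos, rfl⟩ (k := 2) ⟨3, three_pos, rfl⟩
      two_ne_zero⟩
  rintro _ ⟨m, hm, rfl⟩
  rw [floor_factorialSeries_mul_factorial _ fun k hk => fourColoringDigit_add_one_lt (by omega)]
  exact_mod_cast factorial_add_factorialHorner_fourColoringDigit_mod_four hm
end
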